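/- arXiv:1704.03510 — 3 statements merged into one kernel-verified Lean document; each statement's English description precedes it below -/
import Mathlib

section
/- Let q ∈ (0,1) and ν > -1 with 4(1-q)(1-q^ν) > q^ν. Then for every z in the open unit disk U, the derivative of the normalized Jackson second q-Bessel function satisfies |(h_ν^{(2)})'(z;q)| ≤ (4(1-q)(1-q^ν) / (4(1-q)(1-q^ν) - q^ν))^2, where (h_ν^{(2)})'(z;q) = Σ_{n≥0} (n+1) K_n z^{n}. -/
open Complex

/-!
With `L = 4(1-q)(1-q^ν)`, every factor of `(q;q)_n` is at least `1 - q` and every factor of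
`(q^{ν+1};q)_n` at least `1 - q^ν`, while `q^{n(n+ν)} ≤ (q^ν)^n`; hence `|K_n| ≤ r^n` with
`r = q^ν / L < 1`. On the unit disk the derivative series is then dominated by
`∑ (n+1) r^n = 1/(1-r)^2 = (L/(L - q^ν))^2`.
-/

/-- q-Pochhammer symbol (a;q)_n = ∏_{k=1}^n (1 - a q^{k-1}). -/
noncomputable def qPoch (a q : ℝ) (n : ℕ) : ℝ :=
  ∏ k ∈ Finset.range n, (1 - a * q ^ k)

/-- Coefficients of the normalized Jackson second q-Bessel function. -/
noncomputable def K (q ν : ℝ) (n : ℕ) : ℝ :=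
  (-1) ^ n * q ^ ((n : ℝ) * ((n : ℝ) + ν)) /
    (4 ^ n * qPoch q q n * qPoch (q ^ (ν + 1)) q n)

/-- Normalized Jackson second q-Bessel function h_ν^{(2)}(z;q). -/
noncomputable def h2 (q ν : ℝ) (z : ℂ) : ℂ :=
  ∑' n : ℕ, (K q ν n : ℂ) * z ^ (n + 1)

/-- Derivative of the normalized Jackson second q-Bessel function. -/
noncomputable def h2' (q ν : ℝ) (z : ℂ) : ℂ :=
  ∑' n : ℕ, ((n : ℂ) + 1) * (K q ν n : ℂ) * z ^ n

/-- m-th partial sum of h_ν^{(2)}(z;q). -/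
noncomputable def h2p (q ν : ℝ) (m : ℕ) (z : ℂ) : ℂ :=
  z + ∑ n ∈ Finset.Icc 1 m, (K q ν n : ℂ) * z ^ (n + 1)

/-- Derivative of the m-th partial sum of h_ν^{(2)}(z;q). -/
noncomputable def h2p' (q ν : ℝ) (m : ℕ) (z : ℂ) : ℂ :=
  1 + ∑ n ∈ Finset.Icc 1 m, ((n : ℂ) + 1) * (K q ν n : ℂ) * z ^ n

lemma pow_one_sub_le_qPoch {a b q : ℝ} (hb : b ≤ 1) (hab : ∀ k : ℕ, a * q ^ k ≤ b) (n : ℕ) :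
    (1 - b) ^ n ≤ qPoch a q n := by
  calc (1 - b) ^ n = ∏ _k ∈ Finset.range n, (1 - b) := by simp
    _ ≤ qPoch a q n :=
      Finset.prod_le_prod (fun _ _ => sub_nonneg.2 hb) fun k _ => by linarith [hab k]

lemma pow_one_sub_le_qPoch_self {q : ℝ} (hq0 : 0 ≤ q) (hq1 : q ≤ 1) (n : ℕ) :
    (1 - q) ^ n ≤ qPoch q q n :=
  pow_one_sub_le_qPoch hq1 (fun _ => mul_le_of_le_one_right hq0 (pow_le_one₀ hq0 hq1)) n

lemma pow_one_sub_rpow_le_qPoch {q ν : ℝ} (hq0 : 0 < q) (hq1 : q ≤ 1) (hqν : q ^ ν ≤ 1)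
    (n : ℕ) : (1 - q ^ ν) ^ n ≤ qPoch (q ^ (ν + 1)) q n := by
  refine pow_one_sub_le_qPoch hqν (fun k => ?_) n
  rw [← Real.rpow_natCast, ← Real.rpow_add hq0]
  exact Real.rpow_le_rpow_of_exponent_ge hq0 hq1 (by linarith [k.cast_nonneg (α := ℝ)])

lemma abs_K_le {q ν : ℝ} (hq0 : 0 < q) (hq1 : q < 1) (hqν : q ^ ν < 1) (n : ℕ) :
    |K q ν n| ≤ (q ^ ν / (4 * (1 - q) * (1 - q ^ ν))) ^ n := by
  have hnum : q ^ ((n : ℝ) * ((n : ℝ) + ν)) ≤ (q ^ ν) ^ n := by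
    rw [← Real.rpow_natCast, ← Real.rpow_mul hq0.le]
    exact Real.rpow_le_rpow_of_exponent_ge hq0 hq1.le (by nlinarith [n.cast_nonneg (α := ℝ)])
  have hden : (4 * (1 - q) * (1 - q ^ ν)) ^ n ≤
      4 ^ n * qPoch q q n * qPoch (q ^ (ν + 1)) q n := by
    have hq := pow_one_sub_le_qPoch_self hq0.le hq1.le n
    have hqν' := pow_one_sub_rpow_le_qPoch hq0 hq1.le hqν.le n
    have : 0 ≤ (1 - q) ^ n := pow_nonneg (sub_nonneg.2 hq1.le) n
    rw [mul_pow, mul_pow]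
    gcongr
    exact mul_nonneg (by positivity) (this.trans hq)
  have hL : 0 < (4 * (1 - q) * (1 - q ^ ν)) ^ n := by
    have := sub_pos.2 hq1; have := sub_pos.2 hqν; positivity
  rw [K, abs_div, abs_mul, abs_pow, abs_neg, abs_one, one_pow, one_mul,
    abs_of_pos (Real.rpow_pos_of_pos hq0 _), abs_of_pos (hL.trans_le hden), div_pow]
  exact div_le_div₀ (by positivity) hnum hL hden

lemma hasSum_succ_mul_geometric {𝕜 : Type*} [NormedDivisionRing 𝕜] [CompleteSpace 𝕜]
    {r : 𝕜} (hr : ‖r‖ < 1) :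
    HasSum (fun n : ℕ => ((n : 𝕜) + 1) * r ^ n) (1 / (1 - r) ^ 2) := by
  simpa using hasSum_choose_mul_geometric_of_norm_lt_one 1 hr

lemma norm_tsum_succ_mul_pow_le {𝕜 : Type*} [RCLike 𝕜] {a : ℕ → 𝕜} {r : ℝ} (hr0 : 0 ≤ r)
    (hr1 : r < 1) (ha : ∀ n, ‖a n‖ ≤ r ^ n) {z : 𝕜} (hz : ‖z‖ ≤ 1) :
    ‖∑' n : ℕ, ((n : 𝕜) + 1) * a n * z ^ n‖ ≤ 1 / (1 - r) ^ 2 := by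
  refine tsum_of_norm_bounded (hasSum_succ_mul_geometric (by rwa [Real.norm_of_nonneg hr0]))
    fun n => ?_
  have hn : ‖(n : 𝕜) + 1‖ = (n : ℝ) + 1 := by exact_mod_cast RCLike.norm_natCast (K := 𝕜) (n + 1)
  rw [norm_mul, norm_mul, norm_pow, hn]
  calc ((n : ℝ) + 1) * ‖a n‖ * ‖z‖ ^ n ≤ ((n : ℝ) + 1) * r ^ n * 1 := by
        gcongr
        · exact ha n
        · exact pow_le_one₀ (norm_nonneg z) hz
    _ = ((n : ℝ) + 1) * r ^ n := mul_one _

theorem stmt1_general (q ν : ℝ) (hq : q ∈ Set.Ioo (0 : ℝ) 1)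
    (hc : 4 * (1 - q) * (1 - q ^ ν) > q ^ ν) :
    ∀ z : ℂ, ‖z‖ < 1 →
      ‖h2' q ν z‖ ≤ (4 * (1 - q) * (1 - q ^ ν) / (4 * (1 - q) * (1 - q ^ ν) - q ^ ν)) ^ 2 := by
  intro z hz
  obtain ⟨hq0, hq1⟩ := hq
  set L := 4 * (1 - q) * (1 - q ^ ν)
  have hqν0 : 0 < q ^ ν := Real.rpow_pos_of_pos hq0 ν
  have hL : 0 < L := hqν0.trans hc
  have hqν1 : q ^ ν < 1 := by
    by_contra! h
    exact hL.not_ge (mul_nonpos_of_nonneg_of_nonpos (by linarith) (by linarith))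
  have hr1 : q ^ ν / L < 1 := (div_lt_one hL).2 hc
  calc ‖h2' q ν z‖ ≤ 1 / (1 - q ^ ν / L) ^ 2 :=
        norm_tsum_succ_mul_pow_le (by positivity) hr1
          (fun n => by simpa using abs_K_le hq0 hq1 hqν1 n) hz.le
    _ = (L / (L - q ^ ν)) ^ 2 := by
        have : L - q ^ ν ≠ 0 := by linarith
        field_simp

theorem stmt1 (q ν : ℝ) (hq : q ∈ Set.Ioo (0 : ℝ) 1) (hν : -1 < ν)
    (hc : 4 * (1 - q) * (1 - q ^ ν) > q ^ ν) :
    ∀ z : ℂ, ‖z‖ < 1 →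
      ‖h2' q ν z‖ ≤ (4 * (1 - q) * (1 - q ^ ν) / (4 * (1 - q) * (1 - q ^ ν) - q ^ ν)) ^ 2 :=
  stmt1_general q ν hq hc
end

section
/- Let q ∈ (0,1) and ν > -1 with (1-q)(1-q^ν) > √q. Then for every z in the open unit disk U, the normalized Jackson third (Hahn–Exton) q-Bessel function satisfies |h_ν^{(3)}(z;q)| ≤ (1-q)(1-q^ν) / ((1-q)(1-q^ν) - √q). -/
open Complex

/-- Coefficients of the normalized Jackson third (Hahn-Exton) q-Bessel function. -/
noncomputable def T (q ν : ℝ) (n : ℕ) : ℝ :=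
  (-1) ^ n * q ^ (((n : ℝ) * ((n : ℝ) + 1)) / 2) /
    (qPoch q q n * qPoch (q ^ (ν + 1)) q n)

/-- Normalized Jackson third (Hahn-Exton) q-Bessel function h_ν^{(3)}(z;q). -/
noncomputable def h3 (q ν : ℝ) (z : ℂ) : ℂ :=
  ∑' n : ℕ, (T q ν n : ℂ) * z ^ (n + 1)

/-- Derivative of the normalized Jackson third q-Bessel function. -/
noncomputable def h3' (q ν : ℝ) (z : ℂ) : ℂ :=
  ∑' n : ℕ, ((n : ℂ) + 1) * (T q ν n : ℂ) * z ^ n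

/-- m-th partial sum of h_ν^{(3)}(z;q). -/
noncomputable def h3p (q ν : ℝ) (m : ℕ) (z : ℂ) : ℂ :=
  z + ∑ n ∈ Finset.Icc 1 m, (T q ν n : ℂ) * z ^ (n + 1)

/-- Derivative of the m-th partial sum of h_ν^{(3)}(z;q). -/
noncomputable def h3p' (q ν : ℝ) (m : ℕ) (z : ℂ) : ℂ :=
  1 + ∑ n ∈ Finset.Icc 1 m, ((n : ℂ) + 1) * (T q ν n : ℂ) * z ^ n

/-! Since each factor of `(q;q)_n (q^{ν+1};q)_n` is at least `(1 - q)(1 - q^ν)` and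
`q^{n(n+1)/2} ≤ (√q)^n`, the coefficients satisfy `|T_n| ≤ r^n` with `r = √q / ((1 - q)(1 - q^ν)) < 1`;
on the unit disk the series is therefore dominated by the geometric series `∑ r^n = 1 / (1 - r)`. -/

lemma pow_le_qPoch {a b q : ℝ} (ha : 0 ≤ a) (hab : a ≤ b) (hb : b ≤ 1) (hq0 : 0 ≤ q)
    (hq1 : q ≤ 1) (n : ℕ) : (1 - b) ^ n ≤ qPoch a q n := by
  rw [qPoch, Finset.pow_eq_prod_const]
  refine Finset.prod_le_prod (fun _ _ => by linarith) fun k _ => ?_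
  have : a * q ^ k ≤ a := mul_le_of_le_one_right ha (pow_le_one₀ hq0 hq1)
  linarith

lemma rpow_triangular_le_sqrt_pow {q : ℝ} (hq0 : 0 < q) (hq1 : q ≤ 1) (n : ℕ) :
    q ^ ((n : ℝ) * ((n : ℝ) + 1) / 2) ≤ Real.sqrt q ^ n := by
  rw [Real.sqrt_eq_rpow, ← Real.rpow_natCast, ← Real.rpow_mul hq0.le]
  apply Real.rpow_le_rpow_of_exponent_ge hq0 hq1
  nlinarith [n.cast_nonneg (α := ℝ)]

lemma abs_T_le {q ν : ℝ} (hq0 : 0 < q) (hq1 : q < 1) (hqν : q ^ ν < 1) (n : ℕ) :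
    |T q ν n| ≤ (Real.sqrt q / ((1 - q) * (1 - q ^ ν))) ^ n := by
  have hqν0 : 0 ≤ q ^ ν := Real.rpow_nonneg hq0.le ν
  have hshift : q ^ (ν + 1) ≤ q ^ ν :=
    Real.rpow_le_rpow_of_exponent_ge hq0 hq1.le (by linarith)
  have h₁ := pow_le_qPoch hq0.le le_rfl hq1.le hq0.le hq1.le n
  have h₂ := pow_le_qPoch (Real.rpow_nonneg hq0.le _) hshift hqν.le hq0.le hq1.le n
  have hden : ((1 - q) * (1 - q ^ ν)) ^ n ≤ qPoch q q n * qPoch (q ^ (ν + 1)) q n := by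
    rw [mul_pow]
    exact mul_le_mul h₁ h₂ (pow_nonneg (by linarith) n)
      ((pow_nonneg (by linarith) n).trans h₁)
  have hden_pos : 0 < ((1 - q) * (1 - q ^ ν)) ^ n :=
    pow_pos (mul_pos (by linarith) (by linarith)) n
  rw [T, abs_div, abs_mul, abs_pow, abs_neg, abs_one, one_pow, one_mul,
    abs_of_nonneg (Real.rpow_nonneg hq0.le _), abs_of_pos (hden_pos.trans_le hden), div_pow]
  exact div_le_div₀ (by positivity) (rpow_triangular_le_sqrt_pow hq0 hq1.le n) hden_pos hden

lemma norm_tsum_mul_pow_succ_le {𝕜 : Type*} [NormedField 𝕜]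
    {c : ℕ → 𝕜} {r : ℝ} (hr0 : 0 ≤ r) (hr1 : r < 1) (hc : ∀ n, ‖c n‖ ≤ r ^ n)
    {z : 𝕜} (hz : ‖z‖ ≤ 1) : ‖∑' n, c n * z ^ (n + 1)‖ ≤ (1 - r)⁻¹ := by
  have hterm : ∀ n, ‖c n * z ^ (n + 1)‖ ≤ r ^ n := fun n => by
    rw [norm_mul, norm_pow]
    exact (mul_le_of_le_one_right (norm_nonneg _) (pow_le_one₀ (norm_nonneg z) hz)).trans (hc n)
  have hgeo := summable_geometric_of_lt_one hr0 hr1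
  have hsum := Summable.of_nonneg_of_le (fun n => norm_nonneg _) hterm hgeo
  calc ‖∑' n, c n * z ^ (n + 1)‖ ≤ ∑' n, ‖c n * z ^ (n + 1)‖ := norm_tsum_le_tsum_norm hsum
    _ ≤ ∑' n, r ^ n := hsum.tsum_le_tsum hterm hgeo
    _ = (1 - r)⁻¹ := tsum_geometric_of_lt_one hr0 hr1

theorem stmt2_general (q ν : ℝ) (hq : q ∈ Set.Ioo (0 : ℝ) 1)
    (hc : (1 - q) * (1 - q ^ ν) > Real.sqrt q) :
    ∀ z : ℂ, ‖z‖ < 1 →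
      ‖h3 q ν z‖ ≤ (1 - q) * (1 - q ^ ν) / ((1 - q) * (1 - q ^ ν) - Real.sqrt q) := by
  intro z hz
  obtain ⟨hq0, hq1⟩ := hq
  set P := (1 - q) * (1 - q ^ ν)
  have hsqrt : 0 < Real.sqrt q := Real.sqrt_pos.mpr hq0
  have hP : 0 < P := hsqrt.trans hc
  have hqν : q ^ ν < 1 := by
    by_contra! h
    exact hP.not_ge (mul_nonpos_of_nonneg_of_nonpos (by linarith) (by linarith))
  have hr1 : Real.sqrt q / P < 1 := (div_lt_one hP).mpr hc
  have hbound := norm_tsum_mul_pow_succ_le (div_nonneg hsqrt.le hP.le) hr1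
    (c := fun n => (T q ν n : ℂ)) (fun n => by simpa using abs_T_le hq0 hq1 hqν n) hz.le
  have hgeom : (1 - Real.sqrt q / P)⁻¹ = P / (P - Real.sqrt q) := by
    rw [one_sub_div hP.ne', inv_div]
  rwa [hgeom] at hbound

theorem stmt2 (q ν : ℝ) (hq : q ∈ Set.Ioo (0 : ℝ) 1) (hν : -1 < ν)
    (hc : (1 - q) * (1 - q ^ ν) > Real.sqrt q) :
    ∀ z : ℂ, ‖z‖ < 1 →
      ‖h3 q ν z‖ ≤ (1 - q) * (1 - q ^ ν) / ((1 - q) * (1 - q ^ ν) - Real.sqrt q) :=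
  stmt2_general q ν hq hc
end

section
/- Let q ∈ (0,1) and ν > -1 with (1-q)(1-q^ν) > √q. Then the coefficients T_n of the normalized Jackson third (Hahn–Exton) q-Bessel function satisfy Σ_{n≥1} (n+1)|T_n| ≤ (2(1-q)(1-q^ν)√q - q) / ((1-q)(1-q^ν) - √q)^2; equivalently, (((1-q)(1-q^ν) - √q)^2 / (2(1-q)(1-q^ν)√q - q)) · Σ_{n≥1} (n+1)|T_n| ≤ 1. -/
/-!
Since `(q;q)_n ≥ (1-q)^n`, `(q^{ν+1};q)_n ≥ (1-q^ν)^n` and `q^{n(n+1)/2} ≤ (√q)^n`, the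
coefficients are dominated by a geometric sequence: `|T_n| ≤ r^n` with
`r = √q / ((1-q)(1-q^ν)) < 1`. Summing `Σ_{n≥1} (n+1) r^n = (2r - r^2)/(1-r)^2` and clearing
the denominators of `r` gives the bound.
-/

open Complex

lemma one_sub_pow_le_qPoch {a q b : ℝ} (hb : b ≤ 1) (h : ∀ k : ℕ, a * q ^ k ≤ b)
    (n : ℕ) : (1 - b) ^ n ≤ qPoch a q n :=
  calc (1 - b) ^ n = ∏ _k ∈ Finset.range n, (1 - b) := by simp
    _ ≤ qPoch a q n :=
      Finset.prod_le_prod (fun _ _ => by linarith) fun k _ => by linarith [h k]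

lemma hasSum_add_two_mul_pow_succ {𝕜 : Type*} [NormedField 𝕜] {r : 𝕜} (hr : ‖r‖ < 1) :
    HasSum (fun n : ℕ => ((n : 𝕜) + 2) * r ^ (n + 1)) ((2 * r - r ^ 2) / (1 - r) ^ 2) := by
  have hr1 : 1 - r ≠ 0 := by
    intro h
    rw [sub_eq_zero] at h
    simp [← h] at hr
  rw [show (2 * r - r ^ 2) / (1 - r) ^ 2 = r * (r / (1 - r) ^ 2) + 2 * r * (1 - r)⁻¹ by
    field_simp; ring]
  exact (((hasSum_coe_mul_geometric_of_norm_lt_one hr).mul_left r).add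
    ((hasSum_geometric_of_norm_lt_one hr).mul_left (2 * r))).congr_fun fun n => by ring

lemma div_sub_sq_eq_div_one_sub_sq {c s : ℝ} (hc : c ≠ 0) :
    (2 * c * s - s ^ 2) / (c - s) ^ 2 = (2 * (s / c) - (s / c) ^ 2) / (1 - s / c) ^ 2 := by
  rw [one_sub_div hc]
  field_simp

theorem stmt15_general (q ν : ℝ) (hq : q ∈ Set.Ioo (0 : ℝ) 1)
    (hc : (1 - q) * (1 - q ^ ν) > Real.sqrt q) :
    ∑' n : ℕ, ((n : ℝ) + 2) * |T q ν (n + 1)| ≤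
      (2 * (1 - q) * (1 - q ^ ν) * Real.sqrt q - q) / ((1 - q) * (1 - q ^ ν) - Real.sqrt q) ^ 2 := by
  obtain ⟨hq0, hq1⟩ := hq
  have hs : 0 < Real.sqrt q := Real.sqrt_pos.2 hq0
  have hc0 : 0 < (1 - q) * (1 - q ^ ν) := hs.trans hc
  have hqν : q ^ ν < 1 := sub_pos.1 (pos_of_mul_pos_right hc0 (by linarith))
  set r := Real.sqrt q / ((1 - q) * (1 - q ^ ν))
  have hr : ‖r‖ < 1 := by
    rw [Real.norm_of_nonneg (by positivity)]
    exact (div_lt_one hc0).2 hc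
  have hbound (n : ℕ) : ((n : ℝ) + 2) * |T q ν (n + 1)| ≤ ((n : ℝ) + 2) * r ^ (n + 1) :=
    mul_le_mul_of_nonneg_left (abs_T_le hq0 hq1 hqν (n + 1)) (by positivity)
  have hgeom := hasSum_add_two_mul_pow_succ hr
  have hsum_eq : (2 * (1 - q) * (1 - q ^ ν) * Real.sqrt q - q) /
      ((1 - q) * (1 - q ^ ν) - Real.sqrt q) ^ 2 = (2 * r - r ^ 2) / (1 - r) ^ 2 := by
    rw [← div_sub_sq_eq_div_one_sub_sq hc0.ne', Real.sq_sqrt hq0.le]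
    ring
  rw [hsum_eq]
  exact hasSum_le hbound
    (hgeom.summable.of_nonneg_of_le (fun n => by positivity) hbound).hasSum hgeom

theorem stmt15 (q ν : ℝ) (hq : q ∈ Set.Ioo (0 : ℝ) 1) (hν : -1 < ν)
    (hc : (1 - q) * (1 - q ^ ν) > Real.sqrt q) :
    ∑' n : ℕ, ((n : ℝ) + 2) * |T q ν (n + 1)| ≤
      (2 * (1 - q) * (1 - q ^ ν) * Real.sqrt q - q) / ((1 - q) * (1 - q ^ ν) - Real.sqrt q) ^ 2 :=
  stmt15_general q ν hq hc
end
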